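/- arXiv:1512.01149 — 2 statements merged into one kernel-verified Lean document; each statement's English description precedes it below -/
import Mathlib

section
/- Let p be a prime and A a commutative ring with no p-torsion. Let x = (x_0, x_1, x_2, …) be a sequence of elements of A such that x_i ∈ pA for all i, and such that x_i → 0 p-adically (for every a ≥ 1 there is i_0 with x_i ∈ p^a A for all i > i_0). Fix n ≥ 0. Then for every a ≥ 1 there exists M such that for all m ≥ M the ghost sum w_{n+m}(x) = Σ_{i=0}^{n+m} p^i x_i^{p^{n+m-i}} lies in p^{m+a} A. -/
/-! Every term `p ^ i * x i ^ p ^ (k - i)` of `w_k(x)`, with `k = n + m`, lies in a high power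
of `(p)`. When `k - i ≥ a`, `x i ∈ (p)` already suffices, since `i + p ^ (k - i) ≥ k + a`.
The remaining indices `i > k - a` are large once `m` is, so there `x i ∈ (p) ^ (2 a)` by
convergence, and `i + 2 a` exceeds `k + a`. -/

theorem Ideal.pow_mul_pow_mem_pow {A : Type*} [CommRing A] {I : Ideal A} {r y : A} {b : ℕ}
    (hr : r ∈ I) (hy : y ∈ I ^ b) (i q : ℕ) : r ^ i * y ^ q ∈ I ^ (i + b * q) := by
  rw [pow_add, pow_mul]
  exact Ideal.mul_mem_mul (Ideal.pow_mem_pow hr i) (Ideal.pow_mem_pow hy q)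

theorem stmt_4_general (p : ℕ) (hp : p.Prime) (A : Type*) [CommRing A]
    (x : ℕ → A)
    (hx : ∀ i, x i ∈ Ideal.span {(p : A)})
    (hconv : ∀ a : ℕ, 1 ≤ a → ∃ i0 : ℕ, ∀ i, i0 < i → x i ∈ Ideal.span {(p : A)} ^ a)
    (n : ℕ) :
    ∀ a : ℕ, 1 ≤ a → ∃ M : ℕ, ∀ m, M ≤ m →
      (∑ i ∈ Finset.range (n + m + 1), (p : A) ^ i * x i ^ p ^ (n + m - i))
        ∈ Ideal.span {(p : A)} ^ (m + a) := by
  intro a ha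
  obtain ⟨i0, hi0⟩ := hconv (2 * a) (by omega)
  refine ⟨i0 + a, fun m hm => Ideal.sum_mem _ fun i _ => ?_⟩
  have hpI : (p : A) ∈ Ideal.span {(p : A)} := Ideal.mem_span_singleton_self _
  rcases le_or_gt (i + a) (n + m) with hfar | hnear
  · have hxi : x i ∈ Ideal.span {(p : A)} ^ 1 := by rw [pow_one]; exact hx i
    refine Ideal.pow_le_pow_right ?_ (Ideal.pow_mul_pow_mem_pow hpI hxi i _)
    have hmul := Nat.mul_le_pow hp.one_lt.ne' (n + m - i)
    have hp2 := Nat.mul_le_mul_right (n + m - i) hp.two_le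
    omega
  · refine Ideal.pow_le_pow_right ?_ (Ideal.pow_mul_pow_mem_pow hpI (hi0 i (by omega)) i _)
    have hq := Nat.le_mul_of_pos_right (2 * a) (Nat.pow_pos (n := n + m - i) hp.pos)
    omega

theorem stmt_4 (p : ℕ) (hp : p.Prime) (A : Type*) [CommRing A]
    (htf : ∀ a : A, (p : A) * a = 0 → a = 0)
    (x : ℕ → A)
    (hx : ∀ i, x i ∈ Ideal.span {(p : A)})
    (hconv : ∀ a : ℕ, 1 ≤ a → ∃ i0 : ℕ, ∀ i, i0 < i → x i ∈ Ideal.span {(p : A)} ^ a)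
    (n : ℕ) :
    ∀ a : ℕ, 1 ≤ a → ∃ M : ℕ, ∀ m, M ≤ m →
      (∑ i ∈ Finset.range (n + m + 1), (p : A) ^ i * x i ^ p ^ (n + m - i))
        ∈ Ideal.span {(p : A)} ^ (m + a) :=
  stmt_4_general p hp A x hx hconv n
end

section
/- Let O be a discrete valuation ring with uniformizer π, fraction field K, and residue field k. Let V be a finite-dimensional K-vector space with a linear action of a group G, and let Λ, Λ' ⊆ V be two G-stable O-lattices. Assume that the induced representation of G on Λ ⊗_O k is irreducible (as a k-linear representation). Then Λ' = π^n Λ for some integer n. -/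
/-
The lattices `π ^ n • Λ` (`n : ℤ`) form a decreasing chain which exhausts `V` because `Λ` spans
`V`, and whose intersection is `0` by Krull's intersection theorem because `Λ` is finitely
generated. Hence the finitely generated nonzero lattice `Λ'` lies in a largest member
`π ^ n • Λ` of the chain, and `M = π ^ (-n) • Λ'` is a `G`-stable sublattice of `Λ` not contained
in `π • Λ`. Irreducibility of `Λ / πΛ` forces `M + πΛ = Λ`, and Nakayama's lemma gives `M = Λ`.
-/

open Pointwise

theorem Submodule.iInf_pow_smul_eq_bot_of_fg {R M : Type*} [CommRing R] [IsNoetherianRing R]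
    [IsLocalRing R] [AddCommGroup M] [Module R M] {π : R} (hπ : ¬IsUnit π)
    {N : Submodule R M} (hN : N.FG) : ⨅ n : ℕ, π ^ n • N = ⊥ := by
  have : Module.Finite R N := Module.Finite.iff_fg.mpr hN
  have hI : Ideal.span {π} ≠ ⊤ := by rwa [Ne, Ideal.span_singleton_eq_top]
  refine eq_bot_iff.mpr fun v hv => ?_
  have hmem : ∀ n : ℕ, v ∈ π ^ n • N := Submodule.mem_iInf _ |>.mp hv
  let w : N := ⟨v, by simpa using hmem 0⟩
  suffices w ∈ ⨅ n : ℕ, Ideal.span {π} ^ n • (⊤ : Submodule R N) by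
    rw [Ideal.iInf_pow_smul_eq_bot_of_isLocalRing _ hI, Submodule.mem_bot] at this
    simpa [w] using congrArg Subtype.val this
  refine Submodule.mem_iInf _ |>.mpr fun n => ?_
  obtain ⟨u, hu, huv⟩ := (Submodule.mem_smul_pointwise_iff_exists _ _ _).mp (hmem n)
  rw [show w = π ^ n • ⟨u, hu⟩ from Subtype.ext huv.symm]
  exact Submodule.smul_mem_smul (Ideal.pow_mem_pow (Ideal.mem_span_singleton_self π) n) trivial

section

variable {O K V : Type*} [CommRing O] [Field K] [AddCommGroup V] [Module K V] [Module O V]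
  {G : Type*} [Group G]

def Representation.IsStable (ρ : Representation K G V) (N : Submodule O V) : Prop :=
  ∀ g : G, ∀ v ∈ N, ρ g v ∈ N

namespace Representation.IsStable

variable {ρ : Representation K G V} {M N : Submodule O V}

theorem sup (hM : ρ.IsStable M) (hN : ρ.IsStable N) : ρ.IsStable (M ⊔ N) := by
  intro g v hv
  obtain ⟨y, hy, z, hz, rfl⟩ := Submodule.mem_sup.mp hv
  rw [map_add]
  exact Submodule.add_mem_sup (hM g y hy) (hN g z hz)

variable [Algebra O K] [IsScalarTower O K V]

theorem smul (hN : ρ.IsStable N) (c : K) : ρ.IsStable (c • N) := by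
  rintro g _ ⟨v, hv, rfl⟩
  exact ⟨ρ g v, hN g v hv, ((ρ g).map_smul c v).symm⟩

end Representation.IsStable

variable [Algebra O K] [IsScalarTower O K V]

theorem Submodule.algebraMap_smul_eq (r : O) (N : Submodule O V) :
    algebraMap O K r • N = r • N := by
  ext v
  simp only [Submodule.mem_smul_pointwise_iff_exists, algebraMap_smul]

theorem Submodule.zpow_smul_antitone {c : K} (hc : c ≠ 0) {Λ : Submodule O V}
    (hcΛ : c • Λ ≤ Λ) : Antitone fun n : ℤ => c ^ n • Λ :=
  antitone_int_of_succ_le fun n =>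
    calc c ^ (n + 1) • Λ = c ^ n • c • Λ := by rw [← mul_smul, ← zpow_add_one₀ hc]
      _ ≤ c ^ n • Λ := smul_le_smul_left _ hcΛ

theorem Representation.IsStable.eq_of_not_le_smul [IsLocalRing O] {ρ : Representation K G V}
    {π : O} (hπ : ¬IsUnit π) {Λ M : Submodule O V} (hΛ : Λ.FG) (hΛG : ρ.IsStable Λ)
    (hirr : ∀ N : Submodule O V, Ideal.span {π} • Λ ≤ N → N ≤ Λ → ρ.IsStable N →
      N = Ideal.span {π} • Λ ∨ N = Λ)
    (hMG : ρ.IsStable M) (hMΛ : M ≤ Λ) (hMπ : ¬M ≤ algebraMap O K π • Λ) : M = Λ := by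
  rw [Submodule.algebraMap_smul_eq, ← Submodule.ideal_span_singleton_smul] at hMπ
  have hπΛ : ρ.IsStable (Ideal.span {π} • Λ) := by
    rw [Submodule.ideal_span_singleton_smul, ← Submodule.algebraMap_smul_eq (K := K)]
    exact hΛG.smul _
  rcases hirr _ le_sup_right (sup_le hMΛ Submodule.smul_le_right) (hMG.sup hπΛ) with h | h
  · exact absurd (h ▸ le_sup_left) hMπ
  · have hI : Ideal.span {π} ≤ Ideal.jacobson ⊥ :=
      (IsLocalRing.le_maximalIdeal (by rwa [Ne, Ideal.span_singleton_eq_top])).trans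
        (IsLocalRing.maximalIdeal_le_jacobson _)
    exact hMΛ.antisymm (Submodule.le_of_le_smul_of_le_jacobson_bot hΛ hI h.ge)

section DVR

variable {π : O}

theorem algebraMap_ne_zero_of_irreducible [IsFractionRing O K] (hπ : Irreducible π) :
    algebraMap O K π ≠ 0 :=
  (map_ne_zero_iff _ (IsFractionRing.injective O K)).mpr hπ.ne_zero

theorem algebraMap_zpow_smul_antitone [IsFractionRing O K] (hπ : Irreducible π)
    (Λ : Submodule O V) :
    Antitone fun n : ℤ => algebraMap O K π ^ n • Λ :=
  Submodule.zpow_smul_antitone (algebraMap_ne_zero_of_irreducible hπ)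
    (by rw [Submodule.algebraMap_smul_eq]; exact Submodule.smul_le_self_of_tower π Λ)

theorem iInf_algebraMap_zpow_smul_eq_bot [IsNoetherianRing O] [IsLocalRing O] (hπ : ¬IsUnit π)
    {Λ : Submodule O V} (hΛ : Λ.FG) : ⨅ n : ℤ, algebraMap O K π ^ n • Λ = ⊥ := by
  refine eq_bot_iff.mpr ((le_iInf fun n : ℕ => iInf_le _ (n : ℤ)).trans ?_)
  simp only [zpow_natCast, ← map_pow, Submodule.algebraMap_smul_eq]
  exact (Submodule.iInf_pow_smul_eq_bot_of_fg hπ hΛ).le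

variable [IsDomain O] [IsDiscreteValuationRing O] [IsFractionRing O K]

theorem iSup_algebraMap_zpow_smul_eq_top (hπ : Irreducible π) {Λ : Submodule O V}
    (hΛ : Submodule.span K (Λ : Set V) = ⊤) :
    ⨆ n : ℤ, algebraMap O K π ^ n • Λ = ⊤ := by
  rw [eq_top_iff]
  rintro v -
  rw [Submodule.mem_iSup_of_directed _ (algebraMap_zpow_smul_antitone hπ Λ).directed_le]
  have hv : v ∈ Submodule.span K (Λ : Set V) := hΛ ▸ Submodule.mem_top
  induction hv using Submodule.span_induction with
  | mem v hv => exact ⟨0, by simpa using hv⟩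
  | zero => exact ⟨0, zero_mem _⟩
  | add v w _ _ hv hw =>
    obtain ⟨a, ha⟩ := hv
    obtain ⟨b, hb⟩ := hw
    exact ⟨min a b, add_mem (algebraMap_zpow_smul_antitone hπ Λ (min_le_left a b) ha)
      (algebraMap_zpow_smul_antitone hπ Λ (min_le_right a b) hb)⟩
  | smul c v _ hv =>
    obtain ⟨m, hm⟩ := hv
    rcases eq_or_ne c 0 with rfl | hc
    · exact ⟨0, by simp⟩
    obtain ⟨k, u, rfl⟩ :=
      IsDiscreteValuationRing.exists_units_eq_smul_zpow_of_irreducible hπ hc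
    obtain ⟨w, hw, rfl⟩ := (Submodule.mem_smul_pointwise_iff_exists _ _ _).mp hm
    refine ⟨k + m, (Submodule.mem_smul_pointwise_iff_exists _ _ _).mpr
      ⟨(u : O) • w, Submodule.smul_mem _ _ hw, ?_⟩⟩
    rw [Units.smul_def, smul_assoc, smul_comm, zpow_add₀ (algebraMap_ne_zero_of_irreducible hπ),
      mul_smul]

theorem exists_le_algebraMap_zpow_smul (hπ : Irreducible π) {Λ M : Submodule O V}
    (hΛ : Submodule.span K (Λ : Set V) = ⊤) (hM : M.FG) :
    ∃ n : ℤ, M ≤ algebraMap O K π ^ n • Λ := by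
  have hcompact := (Submodule.fg_iff_compact M).mp hM
  rw [CompleteLattice.isCompactElement_iff_le_of_directed_sSup_le] at hcompact
  obtain ⟨_, ⟨n, rfl⟩, hn⟩ := hcompact _ (Set.range_nonempty _)
    (algebraMap_zpow_smul_antitone hπ Λ).directed_le.directedOn_range
    (by rw [sSup_range, iSup_algebraMap_zpow_smul_eq_top hπ hΛ]; exact le_top)
  exact ⟨n, hn⟩

theorem exists_le_algebraMap_zpow_smul_not_le (hπ : Irreducible π) {Λ M : Submodule O V}
    (hΛfg : Λ.FG) (hΛ : Submodule.span K (Λ : Set V) = ⊤) (hMfg : M.FG) (hM : M ≠ ⊥) :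
    ∃ n : ℤ, M ≤ algebraMap O K π ^ n • Λ ∧ ¬M ≤ algebraMap O K π ^ (n + 1) • Λ := by
  have hbdd : ∃ b : ℤ, ∀ n : ℤ, M ≤ algebraMap O K π ^ n • Λ → n ≤ b := by
    by_contra! h
    refine hM (eq_bot_iff.mpr ?_)
    rw [← iInf_algebraMap_zpow_smul_eq_bot (K := K) hπ.not_isUnit hΛfg]
    refine le_iInf fun n => ?_
    obtain ⟨m, hm, hnm⟩ := h n
    exact hm.trans (algebraMap_zpow_smul_antitone hπ Λ hnm.le)
  obtain ⟨n, hn, hmax⟩ := Int.exists_greatest_of_bdd hbdd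
    (exists_le_algebraMap_zpow_smul hπ hΛ hMfg)
  exact ⟨n, hn, fun h => (hmax _ h).not_gt (lt_add_one n)⟩

end DVR

end

open Pointwise in
theorem stmt_5_general (O : Type*) [CommRing O] [IsDomain O] [IsDiscreteValuationRing O]
    (K : Type*) [Field K] [Algebra O K] [IsFractionRing O K]
    (π : O) (hπ : Irreducible π)
    (V : Type*) [AddCommGroup V] [Module K V]
    [Module O V] [IsScalarTower O K V]
    (G : Type*) [Group G] (ρ : Representation K G V)
    (Λ Λ' : Submodule O V)
    (hΛfg : Λ.FG) (hΛ'fg : Λ'.FG)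
    (hΛspan : Submodule.span K (Λ : Set V) = ⊤)
    (hΛ'span : Submodule.span K (Λ' : Set V) = ⊤)
    (hΛG : ∀ g : G, ∀ v ∈ Λ, ρ g v ∈ Λ)
    (hΛ'G : ∀ g : G, ∀ v ∈ Λ', ρ g v ∈ Λ')
    (hirr : ∀ N : Submodule O V, Ideal.span {π} • Λ ≤ N → N ≤ Λ →
      (∀ g : G, ∀ v ∈ N, ρ g v ∈ N) → N = Ideal.span {π} • Λ ∨ N = Λ) :
    ∃ n : ℤ, (Λ' : Set V) = ((algebraMap O K π) ^ n) • (Λ : Set V) := by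
  rcases subsingleton_or_nontrivial V with _ | _
  · exact ⟨0, by rw [zpow_zero, one_smul, Subsingleton.elim Λ' Λ]⟩
  have hΛ'0 : Λ' ≠ ⊥ := by
    rintro rfl
    simp at hΛ'span
  obtain ⟨n, hn, hmax⟩ :=
    exists_le_algebraMap_zpow_smul_not_le hπ hΛfg hΛspan hΛ'fg hΛ'0
  set x := algebraMap O K π
  have hx : x ≠ 0 := algebraMap_ne_zero_of_irreducible hπ
  have hxn : x ^ n ≠ 0 := zpow_ne_zero n hx
  have hMΛ : (x ^ n)⁻¹ • Λ' ≤ Λ := by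
    simpa [inv_smul_smul₀ hxn] using smul_le_smul_left (x ^ n)⁻¹ hn
  have hMπ : ¬(x ^ n)⁻¹ • Λ' ≤ x • Λ := fun h => hmax <| by
    simpa [smul_inv_smul₀ hxn, ← mul_smul, ← zpow_add_one₀ hx] using
      smul_le_smul_left (x ^ n) h
  have hM : (x ^ n)⁻¹ • Λ' = Λ :=
    Representation.IsStable.eq_of_not_le_smul hπ.not_isUnit hΛfg hΛG hirr
      (Representation.IsStable.smul hΛ'G _) hMΛ hMπ
  exact ⟨n, congrArg SetLike.coe ((inv_smul_eq_iff₀ hxn).mp hM)⟩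

open Pointwise in
theorem stmt_5 (O : Type*) [CommRing O] [IsDomain O] [IsDiscreteValuationRing O]
    (K : Type*) [Field K] [Algebra O K] [IsFractionRing O K]
    (π : O) (hπ : Irreducible π)
    (V : Type*) [AddCommGroup V] [Module K V] [FiniteDimensional K V]
    [Module O V] [IsScalarTower O K V]
    (G : Type*) [Group G] (ρ : Representation K G V)
    (Λ Λ' : Submodule O V)
    (hΛfg : Λ.FG) (hΛ'fg : Λ'.FG)
    (hΛspan : Submodule.span K (Λ : Set V) = ⊤)
    (hΛ'span : Submodule.span K (Λ' : Set V) = ⊤)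
    (hΛG : ∀ g : G, ∀ v ∈ Λ, ρ g v ∈ Λ)
    (hΛ'G : ∀ g : G, ∀ v ∈ Λ', ρ g v ∈ Λ')
    (hirr : ∀ N : Submodule O V, Ideal.span {π} • Λ ≤ N → N ≤ Λ →
      (∀ g : G, ∀ v ∈ N, ρ g v ∈ N) → N = Ideal.span {π} • Λ ∨ N = Λ) :
    ∃ n : ℤ, (Λ' : Set V) = ((algebraMap O K π) ^ n) • (Λ : Set V) :=
  stmt_5_general O K π hπ V G ρ Λ Λ' hΛfg hΛ'fg hΛspan hΛ'span hΛG hΛ'G hirr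
end
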